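/- Every tree-structured layout L that is not equal to the initial layout L₀ is the result of a layout cut applied to some tree-structured layout L″ whose last partition L″_B has strictly fewer parts than L_B. -/
import Mathlib


/-- `P` is a partition of the finite task set `S` into nonempty pairwise-disjoint task sets. -/
def IsPartition {α : Type*} [DecidableEq α] (S : Finset α) (P : Finset (Finset α)) : Prop :=
  (∀ p ∈ P, p.Nonempty) ∧ (∀ p ∈ P, ∀ q ∈ P, p ≠ q → Disjoint p q) ∧ P.sup id = S

/-- The partition `Q` refines the partition `P`: every part of `Q` is contained in some
part of `P`. -/
def Refines {α : Type*} (Q P : Finset (Finset α)) : Prop :=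
  ∀ q ∈ Q, ∃ p ∈ P, q ⊆ p

/-- A tree-structured layout over the task set `S` with `B` branching points: a sequence of
partitions of `S` such that later partitions refine earlier ones. -/
def IsLayout {α : Type*} [DecidableEq α] (S : Finset α) {B : ℕ}
    (L : Fin B → Finset (Finset α)) : Prop :=
  (∀ i, IsPartition S (L i)) ∧ ∀ i j : Fin B, i ≤ j → Refines (L j) (L i)

/-- `L'` is obtained from the layout `L` by a layout cut: choose an index `i` and a task set
`P` that is a part of `L j` for every `j ≥ i`, divide `P` into two nonempty disjoint sets
`A`, `B'` with `A ∪ B' = P`; keep `L' j = L j` for `j < i` and for `j ≥ i` replace the part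
`P` by the two parts `A` and `B'`. -/
def IsCut {α : Type*} [DecidableEq α] {B : ℕ}
    (L L' : Fin B → Finset (Finset α)) : Prop :=
  ∃ (i : Fin B) (P A B' : Finset α),
    (∀ j, i ≤ j → P ∈ L j) ∧ A.Nonempty ∧ B'.Nonempty ∧ Disjoint A B' ∧ A ∪ B' = P ∧
    (∀ j, j < i → L' j = L j) ∧
    (∀ j, i ≤ j → L' j = insert A (insert B' ((L j).erase P)))

section Aux
variable {α : Type*} [DecidableEq α]

lemma part_subset {S : Finset α} {P : Finset (Finset α)} (h : IsPartition S P)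
    {p : Finset α} (hp : p ∈ P) : p ⊆ S := by
  have := Finset.le_sup (f := id) hp
  rwa [h.2.2] at this

lemma exists_part {S : Finset α} {P : Finset (Finset α)} (h : IsPartition S P)
    {x : α} (hx : x ∈ S) : ∃ p ∈ P, x ∈ p := by
  rw [← h.2.2] at hx
  simpa using Finset.mem_sup.mp hx

lemma part_eq_of_subset {S : Finset α} {P : Finset (Finset α)} (h : IsPartition S P)
    {p q : Finset α} (hp : p ∈ P) (hq : q ∈ P) (hpq : p ⊆ q) : p = q := by
  by_contra hne
  have hd := h.2.1 p hp q hq hne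
  have : p = ∅ := Finset.subset_empty.mp (hd le_rfl hpq)
  exact (h.1 p hp).ne_empty this

lemma partition_subset_eq {S : Finset α} {P Q : Finset (Finset α)}
    (hP : IsPartition S P) (hQ : IsPartition S Q) (hsub : P ⊆ Q) : P = Q := by
  apply Finset.Subset.antisymm hsub
  intro q hq
  obtain ⟨x, hx⟩ := hQ.1 q hq
  have hxS : x ∈ S := part_subset hQ hq hx
  obtain ⟨p, hp, hxp⟩ := exists_part hP hxS
  have hpQ : p ∈ Q := hsub hp
  have : p = q := by
    by_contra hne
    exact (Finset.disjoint_left.mp (hQ.2.1 p hpQ q hq hne)) hxp hx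
  rwa [← this]

lemma cut_construct {S : Finset α} {B : ℕ} (hB : 1 ≤ B)
    (L : Fin B → Finset (Finset α)) (hL : IsLayout S L)
    (i₀ : ℕ) (hi₀ : i₀ < B) (A B' : Finset α)
    (hA : A ∈ L ⟨B - 1, by omega⟩) (hB' : B' ∈ L ⟨B - 1, by omega⟩) (hAB : A ≠ B')
    (hconst : ∀ j : Fin B, i₀ ≤ j.val → L j = L ⟨B - 1, by omega⟩)
    (hPp : ∀ j : Fin B, j.val < i₀ → ∃ p ∈ L j, A ∪ B' ⊆ p) :
    ∃ L'' : Fin B → Finset (Finset α), IsLayout S L'' ∧ IsCut L'' L ∧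
      (L'' (⟨B - 1, by omega⟩ : Fin B)).card < (L (⟨B - 1, by omega⟩ : Fin B)).card := by
  set last : Fin B := ⟨B - 1, by omega⟩ with hlast
  have hle_last : ∀ j : Fin B, j ≤ last := by
    intro j; rw [Fin.le_def]; have := j.isLt; simp only [hlast]; omega
  have hpart := hL.1
  have hAne : A.Nonempty := (hpart last).1 A hA
  have hB'ne : B'.Nonempty := (hpart last).1 B' hB'
  have hdisj : Disjoint A B' := (hpart last).2.1 A hA B' hB' hAB
  set P : Finset α := A ∪ B' with hPdef
  have hPnotin : P ∉ L last := by
    intro hP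
    have : A = P := part_eq_of_subset (hpart last) hA hP Finset.subset_union_left
    obtain ⟨x, hx⟩ := hB'ne
    have hxA : x ∉ A := Finset.disjoint_right.mp hdisj hx
    rw [this] at hxA; exact hxA (Finset.mem_union_right _ hx)
  set X : Finset (Finset α) := ((L last).erase A).erase B' with hXdef
  have hPnotinX : P ∉ X := fun h => hPnotin (Finset.mem_of_mem_erase (Finset.mem_of_mem_erase h))
  set M : Finset (Finset α) := insert P X with hMdef
  have hXsub : ∀ q ∈ X, q ∈ L last ∧ q ≠ A ∧ q ≠ B' := by
    intro q hq
    have h1 := Finset.mem_erase.mp hq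
    have h2 := Finset.mem_erase.mp h1.2
    exact ⟨h2.2, h2.1, h1.1⟩
  have hMpart : IsPartition S M := by
    refine ⟨?_, ?_, ?_⟩
    · intro q hq
      rcases Finset.mem_insert.mp hq with h | h
      · rw [h]; exact hAne.mono Finset.subset_union_left
      · exact (hpart last).1 q (hXsub q h).1
    · intro p hp q hq hne
      have key : ∀ q ∈ X, Disjoint P q := by
        intro q hq
        obtain ⟨hqL, hqA, hqB⟩ := hXsub q hq
        rw [hPdef, Finset.disjoint_union_left]
        exact ⟨(hpart last).2.1 A hA q hqL (fun h => hqA h.symm),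
               (hpart last).2.1 B' hB' q hqL (fun h => hqB h.symm)⟩
      rcases Finset.mem_insert.mp hp with hp1 | hp1 <;> rcases Finset.mem_insert.mp hq with hq1 | hq1
      · exact absurd (hp1.trans hq1.symm) hne
      · rw [hp1]; exact key q hq1
      · rw [hq1]; exact (key p hp1).symm
      · exact (hpart last).2.1 p (hXsub p hp1).1 q (hXsub q hq1).1 hne
    · apply le_antisymm
      · apply Finset.sup_le
        intro q hq
        rcases Finset.mem_insert.mp hq with h | h
        · rw [h]
          exact Finset.union_subset (part_subset (hpart last) hA) (part_subset (hpart last) hB')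
        · exact part_subset (hpart last) (hXsub q h).1
      · intro x hx
        obtain ⟨q, hq, hxq⟩ := exists_part (hpart last) hx
        rw [Finset.mem_sup]
        by_cases hqA : q = A
        · exact ⟨P, Finset.mem_insert_self _ _, Finset.mem_union_left _ (hqA ▸ hxq)⟩
        by_cases hqB : q = B'
        · exact ⟨P, Finset.mem_insert_self _ _, Finset.mem_union_right _ (hqB ▸ hxq)⟩
        · exact ⟨q, Finset.mem_insert_of_mem
            (Finset.mem_erase.mpr ⟨hqB, Finset.mem_erase.mpr ⟨hqA, hq⟩⟩), hxq⟩
  set L'' : Fin B → Finset (Finset α) := fun j => if j.val < i₀ then L j else M with hL''def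
  have hL''lt : ∀ j : Fin B, j.val < i₀ → L'' j = L j := by
    intro j hj; simp [hL''def, hj]
  have hL''ge : ∀ j : Fin B, i₀ ≤ j.val → L'' j = M := by
    intro j hj; simp [hL''def, Nat.not_lt.mpr hj]
  have hMrefines : ∀ j : Fin B, j.val < i₀ → Refines M (L j) := by
    intro j hj q hq
    rcases Finset.mem_insert.mp hq with h | h
    · obtain ⟨p, hp, hsub⟩ := hPp j hj
      exact ⟨p, hp, h ▸ hsub⟩
    · exact hL.2 j last (hle_last j) q (hXsub q h).1
  have hLayout : IsLayout S L'' := by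
    constructor
    · intro j
      by_cases hj : j.val < i₀
      · rw [hL''lt j hj]; exact hpart j
      · rw [hL''ge j (Nat.not_lt.mp hj)]; exact hMpart
    · intro i j hij
      by_cases hj : j.val < i₀
      · have hi : i.val < i₀ := lt_of_le_of_lt hij hj
        rw [hL''lt j hj, hL''lt i hi]
        exact hL.2 i j hij
      · rw [hL''ge j (Nat.not_lt.mp hj)]
        by_cases hi : i.val < i₀
        · rw [hL''lt i hi]
          exact hMrefines i hi
        · rw [hL''ge i (Nat.not_lt.mp hi)]
          exact fun q hq => ⟨q, hq, subset_rfl⟩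
  have hCut : IsCut L'' L := by
    refine ⟨⟨i₀, hi₀⟩, P, A, B', ?_, hAne, hB'ne, hdisj, rfl, ?_, ?_⟩
    · intro j hj
      rw [hL''ge j hj]
      exact Finset.mem_insert_self _ _
    · intro j hj
      exact (hL''lt j hj).symm
    · intro j hj
      have hLj : L j = L last := hconst j hj
      rw [hL''ge j hj, hLj, hMdef, Finset.erase_insert hPnotinX, hXdef,
        Finset.insert_erase (Finset.mem_erase.mpr ⟨fun h => hAB h.symm, hB'⟩),
        Finset.insert_erase hA]
  refine ⟨L'', hLayout, hCut, ?_⟩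
  show (L'' last).card < (L last).card
  have hcard2 : 1 < (L last).card := Finset.one_lt_card.mpr ⟨A, hA, B', hB', hAB⟩
  have hlge : L'' last = M := hL''ge last (by simp only [hlast]; omega)
  rw [hlge, hMdef, Finset.card_insert_of_notMem hPnotinX, hXdef,
    Finset.card_erase_of_mem (Finset.mem_erase.mpr ⟨fun h => hAB h.symm, hB'⟩),
    Finset.card_erase_of_mem hA]
  omega

end Aux

/-- Every tree-structured layout `L` that is not the initial layout (all branching points
carrying the single-block partition `{S}`) is the result of a layout cut applied to some
tree-structured layout `L''` whose last partition has strictly fewer parts than that of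
`L`. -/
theorem layout_ne_initial_is_cut {α : Type*} [DecidableEq α]
    (S : Finset α) (hS : S.Nonempty) (B : ℕ) (hB : 1 ≤ B)
    (L : Fin B → Finset (Finset α)) (hL : IsLayout S L)
    (hne : L ≠ fun _ : Fin B => ({S} : Finset (Finset α))) :
    ∃ L'' : Fin B → Finset (Finset α), IsLayout S L'' ∧ IsCut L'' L ∧
      (L'' (⟨B - 1, by omega⟩ : Fin B)).card < (L (⟨B - 1, by omega⟩ : Fin B)).card := by
  classical
  set last : Fin B := ⟨B - 1, by omega⟩ with hlast
  have hle_last : ∀ j : Fin B, j ≤ last := by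
    intro j; rw [Fin.le_def]; have := j.isLt; simp only [hlast]; omega
  have hpart := hL.1
  have hlastne : L last ≠ {S} := by
    intro h
    apply hne
    funext j
    have hSmem : S ∈ L j := by
      obtain ⟨p, hp, hsub⟩ := hL.2 j last (hle_last j) S (by rw [h]; exact Finset.mem_singleton_self S)
      have : S = p := Finset.Subset.antisymm hsub (part_subset (hpart j) hp)
      rwa [this]
    ext q
    simp only [Finset.mem_singleton]
    constructor
    · intro hq
      exact part_eq_of_subset (hpart j) hq hSmem (part_subset (hpart j) hq)
    · intro hq; rw [hq]; exact hSmem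
  have hex : ∃ n, ∃ h : n < B, L ⟨n, h⟩ = L last := ⟨B - 1, by omega, rfl⟩
  set i₀ := Nat.find hex with hi₀def
  obtain ⟨hi₀B, hLi₀⟩ := Nat.find_spec hex
  have hconst : ∀ j : Fin B, i₀ ≤ j.val → L j = L last := by
    intro j hj
    refine (partition_subset_eq (hpart last) (hpart j) ?_).symm
    intro q hq
    obtain ⟨r, hr, hqr⟩ := hL.2 j last (hle_last j) q hq
    obtain ⟨s, hs, hrs⟩ := hL.2 ⟨i₀, hi₀B⟩ j (by rw [Fin.le_def]; exact hj) r hr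
    rw [hLi₀] at hs
    have hqs : q = s := part_eq_of_subset (hpart last) hq hs (hqr.trans hrs)
    have hrq : r = q := Finset.Subset.antisymm (hqs ▸ hrs) hqr
    exact hrq ▸ hr
  rcases Nat.eq_zero_or_pos i₀ with h0 | hpos
  · have hcard : 1 < (L last).card := by
      by_contra hc
      push_neg at hc
      apply hlastne
      obtain ⟨x, hx⟩ := hS
      obtain ⟨p, hp, _⟩ := exists_part (hpart last) hx
      have hsing : L last = {p} :=
        Finset.eq_singleton_iff_unique_mem.mpr ⟨hp, fun q hq => Finset.card_le_one.mp hc q hq p hp⟩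
      have hpS : p = S := by
        have h2 := (hpart last).2.2
        rw [hsing] at h2
        simpa using h2
      rw [hsing, hpS]
    obtain ⟨A, hA, B', hB', hAB⟩ := Finset.one_lt_card.mp hcard
    exact cut_construct hB L hL 0 (by omega) A B' hA hB' hAB
      (fun j _ => hconst j (by omega)) (fun j hj => absurd hj (by omega))
  · set i₁ : Fin B := ⟨i₀ - 1, by omega⟩ with hi₁def
    have hne1 : L i₁ ≠ L last := by
      intro h
      exact Nat.find_min hex (show i₀ - 1 < i₀ by omega) ⟨by omega, h⟩
    have hexA : ∃ A ∈ L last, A ∉ L i₁ := by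
      by_contra hcon
      push_neg at hcon
      exact hne1 (partition_subset_eq (hpart last) (hpart i₁) (fun q hq => hcon q hq)).symm
    obtain ⟨A, hA, hAnot⟩ := hexA
    obtain ⟨p, hp, hAp⟩ := hL.2 i₁ last (hle_last i₁) A hA
    have hApne : A ≠ p := fun h => hAnot (h ▸ hp)
    have hnotsub : ¬ p ⊆ A := fun h => hApne (Finset.Subset.antisymm hAp h)
    obtain ⟨x, hxp, hxA⟩ := Finset.not_subset.mp hnotsub
    have hxS : x ∈ S := part_subset (hpart i₁) hp hxp
    obtain ⟨B', hB', hxB'⟩ := exists_part (hpart last) hxS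
    have hAB : A ≠ B' := fun h => hxA (h ▸ hxB')
    have hB'p : B' ⊆ p := by
      obtain ⟨r, hr, hB'r⟩ := hL.2 i₁ last (hle_last i₁) B' hB'
      have hrp : r = p := by
        by_contra hne'
        exact (Finset.disjoint_left.mp ((hpart i₁).2.1 r hr p hp hne')) (hB'r hxB') hxp
      rwa [hrp] at hB'r
    have hPp : ∀ j : Fin B, j.val < i₀ → ∃ q ∈ L j, A ∪ B' ⊆ q := by
      intro j hj
      obtain ⟨q, hq, hpq⟩ := hL.2 j i₁ (by rw [Fin.le_def]; simp only [hi₁def]; omega) p hp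
      exact ⟨q, hq, (Finset.union_subset hAp hB'p).trans hpq⟩
    exact cut_construct hB L hL i₀ hi₀B A B' hA hB' hAB hconst hPp
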